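/- With δ, D, S as above, for every composition [n_1,...,n_{s-1},2] ending in 2, (D - 2δ∘S - 2S∘δ)[n_1,...,n_{s-1},2] = 2·Σ_{k=1}^{s} (-1)^{s+k+n_1+...+n_{k-1}} [n_1,...,n_{k-1},1,n_k,...,n_{s-1}]. -/

import Mathlib

open Finsupp

noncomputable section

/-- `P x y`, as an integer. -/
def Pz (x y : ℕ) : ℤ :=
  if Odd x ∧ Odd y then 0 else (Nat.choose (x / 2 + y / 2) (x / 2) : ℤ)

/-- `Q m`: `2` for even `m`, `0` for odd `m`. -/
def Qz (m : ℕ) : ℤ := if Even m then 2 else 0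

/-- Merge the parts at positions `l` and `l+1` of a composition. -/
def mergeAt (L : List ℕ) (l : ℕ) : List ℕ :=
  L.take l ++ (L.getD l 0 + L.getD (l + 1) 0) :: L.drop (l + 2)

/-- Extend a map on basis elements to an additive map on the free abelian
group on compositions. -/
def liftOp (f : List ℕ → (List ℕ →₀ ℤ)) : (List ℕ →₀ ℤ) →+ (List ℕ →₀ ℤ) :=
  Finsupp.liftAddHom fun L => zmultiplesHom _ (f L)

/-- Value of the Fuks–Vainshtein differential `δ` on a composition. -/
def dB (L : List ℕ) : List ℕ →₀ ℤ :=
  ∑ l ∈ Finset.range (L.length - 1),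
    ((-1 : ℤ) ^ l * Pz (L.getD l 0) (L.getD (l + 1) 0)) • Finsupp.single (mergeAt L l) 1

/-- The differential `δ`. -/
def deltaOp : (List ℕ →₀ ℤ) →+ (List ℕ →₀ ℤ) := liftOp dB

/-- Value of Napolitano's operator `D` on a composition: decrease an even part
by one, with coefficient `2 · (-1)^(sum of preceding parts)`. -/
def DB (L : List ℕ) : List ℕ →₀ ℤ :=
  ∑ i ∈ Finset.range L.length,
    (Qz (L.getD i 0) * (-1 : ℤ) ^ ((L.take i).sum)) •
      Finsupp.single (L.set i (L.getD i 0 - 1)) 1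

/-- The operator `D`. -/
def DOp : (List ℕ →₀ ℤ) →+ (List ℕ →₀ ℤ) := liftOp DB

/-- Value of the operator `S` on a composition: insert a `1` at position `k`
and subtract `2` from a later part `i ≥ k`, with sign
`(-1)^(k + sum of the first k parts)` (1-indexed: `(-1)^{k+1+n_1+⋯+n_{k-1}}`);
terms where the decreased part would become `≤ 0` are omitted. -/
def SB (L : List ℕ) : List ℕ →₀ ℤ :=
  ∑ i ∈ Finset.range L.length, ∑ k ∈ Finset.range (i + 1),
    if 3 ≤ L.getD i 0 then
      ((-1 : ℤ) ^ (k + (L.take k).sum)) •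
        Finsupp.single (List.insertIdx (L.set i (L.getD i 0 - 2)) k 1) (1 : ℤ)
    else 0

/-- The operator `S`. -/
def SOp : (List ℕ →₀ ℤ) →+ (List ℕ →₀ ℤ) := liftOp SB

end

/-! ### Auxiliary machinery -/

noncomputable section Aux
open Finsupp

/-- indicator scalar -/
def ch (p : Prop) [Decidable p] : ℤ := if p then 1 else 0

/-- prepend `n` to every composition -/
def cnsOp (n : ℕ) : (List ℕ →₀ ℤ) →+ (List ℕ →₀ ℤ) :=
  liftOp fun w => single (n :: w) 1

/-- merge `n` with the head of a composition -/
def hmB (n : ℕ) : List ℕ → (List ℕ →₀ ℤ)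
  | [] => 0
  | a :: T => Pz n a • single ((n + a) :: T) 1

def hmOp (n : ℕ) : (List ℕ →₀ ℤ) →+ (List ℕ →₀ ℤ) := liftOp (hmB n)

/-- decrease a part (which is at least 3) by 2 -/
def T2B (w : List ℕ) : List ℕ →₀ ℤ :=
  ∑ i ∈ Finset.range w.length,
    if 3 ≤ w.getD i 0 then single (w.set i (w.getD i 0 - 2)) (1 : ℤ) else 0

def T2op : (List ℕ →₀ ℤ) →+ (List ℕ →₀ ℤ) := liftOp T2B

lemma liftOp_single (f : List ℕ → (List ℕ →₀ ℤ)) (L : List ℕ) (c : ℤ) :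
    liftOp f (single L c) = c • f L := by
  simp [liftOp]

lemma cns_single (n : ℕ) (w : List ℕ) (c : ℤ) :
    cnsOp n (single w c) = single (n :: w) c := by
  simp [cnsOp, liftOp_single]

lemma deltaOp_single (w : List ℕ) : deltaOp (single w (1:ℤ)) = dB w := by
  simp [deltaOp, liftOp_single]

lemma SOp_single (w : List ℕ) : SOp (single w (1:ℤ)) = SB w := by
  simp [SOp, liftOp_single]

lemma DOp_single (w : List ℕ) : DOp (single w (1:ℤ)) = DB w := by
  simp [DOp, liftOp_single]

lemma T2op_single (w : List ℕ) : T2op (single w (1:ℤ)) = T2B w := by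
  simp [T2op, liftOp_single]

lemma hmOp_single (n : ℕ) (w : List ℕ) : hmOp n (single w (1:ℤ)) = hmB n w := by
  simp [hmOp, liftOp_single]

/-! #### basis recursions -/

lemma mergeAt_cons (n : ℕ) (u : List ℕ) (l : ℕ) :
    mergeAt (n :: u) (l+1) = n :: mergeAt u l := by
  simp [mergeAt]

lemma DB_cons (n : ℕ) (w : List ℕ) :
    DB (n :: w) = Qz n • single ((n-1) :: w) (1:ℤ) + ((-1:ℤ)^n) • cnsOp n (DB w) := by
  rw [DB, DB, List.length_cons, Finset.sum_range_succ', map_sum, Finset.smul_sum, add_comm]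
  congr 1
  · simp
  · refine Finset.sum_congr rfl fun i _ => ?_
    rw [map_zsmul, cns_single, smul_smul]
    congr 1
    simp only [List.getD_cons_succ, List.take_succ_cons, List.sum_cons, pow_add]
    ring

lemma dB_cons (n : ℕ) (w : List ℕ) :
    dB (n :: w) = hmB n w - cnsOp n (dB w) := by
  cases w with
  | nil => simp [dB, hmB]
  | cons a T =>
    rw [dB, dB, sub_eq_add_neg, add_comm]
    rw [show (n :: a :: T).length - 1 = T.length + 1 from rfl,
        show (a :: T).length - 1 = T.length from rfl, Finset.sum_range_succ']
    congr 1
    · rw [map_sum, ← Finset.sum_neg_distrib]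
      refine Finset.sum_congr rfl fun l _ => ?_
      rw [map_zsmul, cns_single, ← neg_smul, mergeAt_cons]
      congr 1
      simp only [List.getD_cons_succ, pow_succ]
      ring
    · simp [mergeAt, hmB]

lemma T2B_cons (n : ℕ) (w : List ℕ) :
    T2B (n :: w) = ch (3 ≤ n) • single ((n-2) :: w) (1:ℤ) + cnsOp n (T2B w) := by
  rw [T2B, T2B, List.length_cons, Finset.sum_range_succ', map_sum, add_comm]
  congr 1
  · simp [ch, ite_smul]
  · refine Finset.sum_congr rfl fun i _ => ?_
    rw [apply_ite (cnsOp n), map_zero, cns_single]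
    rfl

lemma SB_cons (n : ℕ) (w : List ℕ) :
    SB (n :: w) = ch (3 ≤ n) • single (1 :: (n-2) :: w) (1:ℤ)
      + cnsOp 1 (cnsOp n (T2B w)) + ((-1:ℤ)^(n+1)) • cnsOp n (SB w) := by
  rw [SB, List.length_cons, Finset.sum_range_succ', add_assoc,
      add_comm (ch (3 ≤ n) • single (1 :: (n-2) :: w) (1:ℤ)) _]
  congr 1
  · -- shifted outer sum
    rw [T2B, SB, map_sum, map_sum, map_sum, Finset.smul_sum, ← Finset.sum_add_distrib]
    refine Finset.sum_congr rfl fun i _ => ?_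
    rw [Finset.sum_range_succ', add_comm]
    congr 1
    · -- inner k = 0 term
      rw [apply_ite (cnsOp n), apply_ite (cnsOp 1), map_zero, map_zero, cns_single, cns_single]
      simp [List.getD_cons_succ]
    · -- inner shifted terms
      rw [map_sum, Finset.smul_sum]
      refine Finset.sum_congr rfl fun k _ => ?_
      rw [apply_ite (cnsOp n), map_zero, map_zsmul, cns_single, smul_ite, smul_zero, smul_smul]
      refine if_congr (by simp) ?_ rfl
      congr 1
      simp only [List.getD_cons_succ, List.take_succ_cons, List.sum_cons, pow_add]
      ring
  · -- i = 0 term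
    simp [ch, ite_smul]

/-! #### operator-level recursions -/

lemma single_eq_smul (w : List ℕ) (c : ℤ) : single w c = c • single w (1:ℤ) := by
  rw [smul_single, smul_eq_mul, mul_one]

lemma delta_cns (n : ℕ) (x : List ℕ →₀ ℤ) :
    deltaOp (cnsOp n x) = hmOp n x - cnsOp n (deltaOp x) := by
  induction x using Finsupp.induction_linear with
  | zero => simp
  | add f g hf hg => simp only [map_add, hf, hg]; abel
  | single w c =>
    rw [single_eq_smul, map_zsmul, map_zsmul, map_zsmul, map_zsmul, map_zsmul, ← smul_sub]
    congr 1
    rw [cns_single, deltaOp_single, deltaOp_single, dB_cons, hmOp_single]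

lemma D_cns (n : ℕ) (x : List ℕ →₀ ℤ) :
    DOp (cnsOp n x) = Qz n • cnsOp (n-1) x + ((-1:ℤ)^n) • cnsOp n (DOp x) := by
  induction x using Finsupp.induction_linear with
  | zero => simp
  | add f g hf hg => simp only [map_add, hf, hg, smul_add]; abel
  | single w c =>
    rw [single_eq_smul, map_zsmul, map_zsmul, map_zsmul, map_zsmul, map_zsmul, smul_comm (Qz n) c,
        smul_comm ((-1:ℤ)^n) c, ← smul_add]
    congr 1
    rw [cns_single, DOp_single, DOp_single, DB_cons, cns_single]

lemma T2_cns (n : ℕ) (x : List ℕ →₀ ℤ) :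
    T2op (cnsOp n x) = ch (3 ≤ n) • cnsOp (n-2) x + cnsOp n (T2op x) := by
  induction x using Finsupp.induction_linear with
  | zero => simp
  | add f g hf hg => simp only [map_add, hf, hg, smul_add]; abel
  | single w c =>
    rw [single_eq_smul, map_zsmul, map_zsmul, map_zsmul, map_zsmul, map_zsmul,
        smul_comm (ch (3 ≤ n)) c, ← smul_add]
    congr 1
    rw [cns_single, T2op_single, T2op_single, T2B_cons, cns_single]

lemma S_cns (n : ℕ) (x : List ℕ →₀ ℤ) :
    SOp (cnsOp n x) = ch (3 ≤ n) • cnsOp 1 (cnsOp (n-2) x)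
      + cnsOp 1 (cnsOp n (T2op x)) + ((-1:ℤ)^(n+1)) • cnsOp n (SOp x) := by
  induction x using Finsupp.induction_linear with
  | zero => simp
  | add f g hf hg => simp only [map_add, hf, hg, smul_add]; abel
  | single w c =>
    rw [single_eq_smul]
    simp only [map_zsmul]
    rw [smul_comm (ch (3 ≤ n)) c, smul_comm ((-1:ℤ)^(n+1)) c, ← smul_add, ← smul_add]
    congr 1
    rw [cns_single, SOp_single, SOp_single, SB_cons, cns_single, cns_single, T2op_single]

lemma hm_cns (n a : ℕ) (x : List ℕ →₀ ℤ) :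
    hmOp n (cnsOp a x) = Pz n a • cnsOp (n + a) x := by
  induction x using Finsupp.induction_linear with
  | zero => simp
  | add f g hf hg => simp only [map_add, hf, hg, smul_add]
  | single w c =>
    rw [single_eq_smul, map_zsmul, map_zsmul, map_zsmul, smul_comm (Pz n a) c]
    congr 1
    rw [cns_single, hmOp_single, cns_single, hmB]

/-! #### scalar lemmas -/

lemma Pz_one_left (m : ℕ) : Pz 1 m = ch (Even m) := by
  rcases Nat.even_or_odd m with h | h
  · rw [Pz, if_neg (by rintro ⟨-, hm⟩; exact (Nat.not_odd_iff_even.mpr h) hm), ch, if_pos h]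
    norm_num
  · rw [Pz, if_pos ⟨odd_one, h⟩, ch, if_neg (Nat.not_even_iff_odd.mpr h)]

lemma Pz_one_right (m : ℕ) : Pz m 1 = ch (Even m) := by
  rcases Nat.even_or_odd m with h | h
  · rw [Pz, if_neg (by rintro ⟨hm, -⟩; exact (Nat.not_odd_iff_even.mpr h) hm), ch, if_pos h]
    norm_num
  · rw [Pz, if_pos ⟨h, odd_one⟩, ch, if_neg (Nat.not_even_iff_odd.mpr h)]

lemma Pz_two_left (m : ℕ) : Pz 2 m = ((m/2 : ℕ) : ℤ) + 1 := by
  rw [Pz, if_neg (by rintro ⟨h2, -⟩; exact (by decide : ¬ Odd 2) h2)]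
  norm_num [Nat.choose_one_right]
  ring

lemma Pz_two_right (m : ℕ) : Pz m 2 = ((m/2 : ℕ) : ℤ) + 1 := by
  rw [Pz, if_neg (by rintro ⟨-, h2⟩; exact (by decide : ¬ Odd 2) h2)]
  norm_num [Nat.choose_succ_self_right]

lemma lemA {n : ℕ} (hn : 1 ≤ n) :
    Qz n - 2 * (ch (3 ≤ n) * Pz 1 (n-2)) = 2 * ch (n = 2) := by
  obtain (rfl | rfl | hx3) : n = 1 ∨ n = 2 ∨ 3 ≤ n := by omega
  · norm_num [Qz, ch]
  · norm_num [Qz, ch]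
  · obtain ⟨m, rfl⟩ : ∃ m, n = m + 3 := ⟨n - 3, by omega⟩
    rw [show m + 3 - 2 = m + 1 from rfl, Pz_one_left]
    simp only [Qz, ch]
    have h1 : Even (m + 3) ↔ Even (m + 1) := by rw [Nat.even_iff, Nat.even_iff]; omega
    rw [if_pos (show 3 ≤ m + 3 by omega), if_neg (show ¬ (m + 3) = 2 by omega)]
    split_ifs with h2 h3 h3
    · ring
    · exact absurd (h1.mp h2) h3
    · exact absurd (h1.mpr h3) h2
    · ring

lemma lemC {x y : ℕ} (hx : 1 ≤ x) (hy : 1 ≤ y) :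
    ch (3 ≤ x) * Pz (x-2) y + ch (3 ≤ y) * Pz x (y-2)
      = ch (3 ≤ x + y) * Pz x y - ch (x = 2) - ch (y = 2) := by
  have ex : ∀ z : ℕ, 1 ≤ z → z = 1 ∨ z = 2 ∨ ∃ c, z = c + 3 := by
    intro z hz
    rcases z with _ | z
    · omega
    rcases z with _ | z
    · exact Or.inl rfl
    rcases z with _ | z
    · exact Or.inr (Or.inl rfl)
    exact Or.inr (Or.inr ⟨z, rfl⟩)
  obtain (rfl | rfl | ⟨a, rfl⟩) := ex x hx <;> obtain (rfl | rfl | ⟨b, rfl⟩) := ex y hy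
  · norm_num [ch]
  · norm_num [ch, Pz_one_left, Nat.even_iff]
  · have h1 : Even (b+1) ↔ Even (b+3) := by rw [Nat.even_iff, Nat.even_iff]; omega
    norm_num [ch, Pz_one_left, show b + 3 - 2 = b + 1 from rfl, h1]
    split_ifs <;> omega
  · norm_num [ch, Pz_one_right, Nat.even_iff]
  · norm_num [ch, Pz_two_left]
  · norm_num [ch, Pz_two_left, show b + 3 - 2 = b + 1 from rfl]
    omega
  · have h1 : Even (a+1) ↔ Even (a+3) := by rw [Nat.even_iff, Nat.even_iff]; omega
    norm_num [ch, Pz_one_right, show a + 3 - 2 = a + 1 from rfl, h1]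
    split_ifs <;> omega
  · norm_num [ch, Pz_two_right, show a + 3 - 2 = a + 1 from rfl]
    omega
  · rw [show a + 3 - 2 = a + 1 from rfl, show b + 3 - 2 = b + 1 from rfl]
    have hch1 : ch (3 ≤ a + 3) = 1 := by rw [ch, if_pos (by omega)]
    have hch2 : ch (3 ≤ b + 3) = 1 := by rw [ch, if_pos (by omega)]
    have hch3 : ch (3 ≤ a + 3 + (b + 3)) = 1 := by rw [ch, if_pos (by omega)]
    have hch4 : ch (a + 3 = 2) = 0 := by rw [ch, if_neg (by omega)]
    have hch5 : ch (b + 3 = 2) = 0 := by rw [ch, if_neg (by omega)]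
    rw [hch1, hch2, hch3, hch4, hch5]
    by_cases hodd : Odd (a+3) ∧ Odd (b+3)
    · have o1 : Odd (a+1) ∧ Odd (b+3) := by
        refine ⟨?_, hodd.2⟩
        have := hodd.1
        rw [Nat.odd_iff] at this ⊢; omega
      have o2 : Odd (a+3) ∧ Odd (b+1) := by
        refine ⟨hodd.1, ?_⟩
        have := hodd.2
        rw [Nat.odd_iff] at this ⊢; omega
      rw [Pz, if_pos o1, Pz, if_pos o2, Pz, if_pos hodd]
      ring
    · have c1 : ¬ (Odd (a+1) ∧ Odd (b+3)) := by
        simp only [Nat.odd_iff] at hodd ⊢; omega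
      have c2 : ¬ (Odd (a+3) ∧ Odd (b+1)) := by
        simp only [Nat.odd_iff] at hodd ⊢; omega
      rw [Pz, if_neg c1, Pz, if_neg c2, Pz, if_neg hodd]
      have hA3 : (a+3)/2 = (a+1)/2 + 1 := by omega
      have hB3 : (b+3)/2 = (b+1)/2 + 1 := by omega
      rw [hA3, hB3]
      have key : ((a+1)/2 + ((b+1)/2 + 1)).choose ((a+1)/2)
          + ((a+1)/2 + 1 + (b+1)/2).choose ((a+1)/2 + 1)
          = ((a+1)/2 + 1 + ((b+1)/2 + 1)).choose ((a+1)/2 + 1) := by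
        rw [show (a+1)/2 + ((b+1)/2 + 1) = (a+1)/2 + (b+1)/2 + 1 by ring,
            show (a+1)/2 + 1 + (b+1)/2 = (a+1)/2 + (b+1)/2 + 1 by ring,
            show (a+1)/2 + 1 + ((b+1)/2 + 1) = ((a+1)/2 + (b+1)/2 + 1) + 1 by ring]
        exact (Nat.choose_succ_succ' ((a+1)/2 + (b+1)/2 + 1) ((a+1)/2)).symm
      rw [one_mul, one_mul, one_mul, sub_zero, sub_zero]
      exact_mod_cast key

lemma lemC' {x y : ℕ} (hx : 1 ≤ x) (hy : 1 ≤ y) :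
    ch (3 ≤ x + y) * Pz x y = Pz x y := by
  by_cases h : 3 ≤ x + y
  · rw [ch, if_pos h, one_mul]
  · have hx1 : x = 1 := by omega
    have hy1 : y = 1 := by omega
    subst hx1; subst hy1
    rw [ch, if_neg h, zero_mul, Pz, if_pos ⟨odd_one, odd_one⟩]

lemma neg_one_pow_even (n : ℕ) : ((-1:ℤ)^n) * ch (Even n) = ch (Even n) := by
  rcases Nat.even_or_odd n with h | h
  · rw [h.neg_one_pow, one_mul]
  · rw [ch, if_neg (Nat.not_even_iff_odd.mpr h), mul_zero]

/-! #### the commutator lemma -/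

lemma P1 (n : ℕ) (w : List ℕ) (hn : 0 < n) (hw : ∀ m ∈ w, 0 < m) :
    deltaOp (T2op (single (n :: w) (1:ℤ))) - T2op (deltaOp (single (n :: w) (1:ℤ)))
      = ((-1:ℤ)^w.length) •
          (if (n :: w).getLast? = some 2 then single ((n :: w).dropLast) (1:ℤ) else 0)
        - (if n = 2 then single w (1:ℤ) else 0) := by
  induction w generalizing n with
  | nil =>
    have h1 : T2op (single [n] (1:ℤ)) = ch (3 ≤ n) • single [n-2] (1:ℤ) := by
      rw [T2op_single, T2B_cons, show T2B [] = 0 by simp [T2B], map_zero, add_zero]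
    have h2 : deltaOp (single [n] (1:ℤ)) = 0 := by rw [deltaOp_single]; simp [dB]
    have h3 : deltaOp (single [n-2] (1:ℤ)) = 0 := by rw [deltaOp_single]; simp [dB]
    rw [h1, h2, map_zero, map_zsmul, h3, smul_zero, sub_zero]
    simp only [List.getLast?_singleton, List.dropLast_singleton, List.length_nil, pow_zero,
      one_smul, Option.some.injEq]
    exact (sub_self _).symm
  | cons a T ih =>
    have ha : 0 < a := hw a (by simp)
    have hT : ∀ m ∈ T, 0 < m := fun m hm => hw m (by simp [hm])
    have iha := ih a ha hT
    have icons := congrArg (cnsOp n) iha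
    simp only [map_sub, map_zsmul, apply_ite (cnsOp n), map_zero, cns_single] at icons
    have e2 : deltaOp (single ((n-2) :: a :: T) (1:ℤ))
        = Pz (n-2) a • single ((n-2+a) :: T) (1:ℤ)
          - cnsOp (n-2) (deltaOp (single (a :: T) (1:ℤ))) := by
      rw [deltaOp_single, dB_cons, deltaOp_single]
      simp only [hmB]
    have e3 : hmOp n (T2op (single (a :: T) (1:ℤ)))
        = (ch (3 ≤ a) * Pz n (a-2)) • single ((n+(a-2)) :: T) (1:ℤ)
          + Pz n a • cnsOp (n+a) (T2op (single T (1:ℤ))) := by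
      rw [T2op_single, T2B_cons, map_add, map_zsmul, hmOp_single, hm_cns, T2op_single]
      simp only [hmB]
      rw [smul_smul]
    have hL : deltaOp (T2op (single (n :: a :: T) (1:ℤ)))
        = (ch (3 ≤ n) * Pz (n-2) a) • single ((n-2+a) :: T) (1:ℤ)
          - ch (3 ≤ n) • cnsOp (n-2) (deltaOp (single (a :: T) (1:ℤ)))
          + ((ch (3 ≤ a) * Pz n (a-2)) • single ((n+(a-2)) :: T) (1:ℤ)
             + Pz n a • cnsOp (n+a) (T2op (single T (1:ℤ))))
          - cnsOp n (deltaOp (T2op (single (a :: T) (1:ℤ)))) := by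
      rw [T2op_single, T2B_cons, ← T2op_single (a :: T), map_add, map_zsmul, delta_cns, e2, e3,
          smul_sub, smul_smul]
      abel
    have hR : T2op (deltaOp (single (n :: a :: T) (1:ℤ)))
        = (Pz n a * ch (3 ≤ n+a)) • single ((n+a-2) :: T) (1:ℤ)
          + Pz n a • cnsOp (n+a) (T2op (single T (1:ℤ)))
          - ch (3 ≤ n) • cnsOp (n-2) (deltaOp (single (a :: T) (1:ℤ)))
          - cnsOp n (T2op (deltaOp (single (a :: T) (1:ℤ)))) := by
      rw [deltaOp_single (n :: a :: T), dB_cons]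
      simp only [hmB]
      rw [← deltaOp_single (a :: T), map_sub, map_zsmul, T2op_single ((n+a) :: T), T2B_cons,
          T2_cns, ← T2op_single T, smul_add, smul_smul, mul_comm (Pz n a) (ch (3 ≤ n + a))]
      rw [mul_comm (ch (3 ≤ n + a)) (Pz n a)]
      abel
    have u1 : (ch (3 ≤ n) * Pz (n-2) a) • single ((n-2+a) :: T) (1:ℤ)
        = (ch (3 ≤ n) * Pz (n-2) a) • single ((n+a-2) :: T) (1:ℤ) := by
      by_cases h : 3 ≤ n
      · rw [show n-2+a = n+a-2 by omega]
      · simp [ch, h]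
    have u2 : (ch (3 ≤ a) * Pz n (a-2)) • single ((n+(a-2)) :: T) (1:ℤ)
        = (ch (3 ≤ a) * Pz n (a-2)) • single ((n+a-2) :: T) (1:ℤ) := by
      by_cases h : 3 ≤ a
      · rw [show n+(a-2) = n+a-2 by omega]
      · simp [ch, h]
    have u3 : ch (n = 2) • single ((n+a-2) :: T) (1:ℤ)
        = (if n = 2 then single (a :: T) (1:ℤ) else 0) := by
      by_cases h : n = 2
      · subst h; rw [ch, if_pos rfl, if_pos rfl, one_smul, show 2+a-2 = a by omega]
      · simp [ch, h]
    have u4 : ch (a = 2) • single ((n+a-2) :: T) (1:ℤ)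
        = (if a = 2 then single (n :: T) (1:ℤ) else 0) := by
      by_cases h : a = 2
      · subst h; rw [ch, if_pos rfl, if_pos rfl, one_smul, show n+2-2 = n by omega]
      · simp [ch, h]
    have sc' : (ch (3 ≤ n) * Pz (n-2) a) • single ((n+a-2) :: T) (1:ℤ)
          + (ch (3 ≤ a) * Pz n (a-2)) • single ((n+a-2) :: T) (1:ℤ)
          - (Pz n a * ch (3 ≤ n+a)) • single ((n+a-2) :: T) (1:ℤ)
        = -(ch (n = 2) • single ((n+a-2) :: T) (1:ℤ))
          - ch (a = 2) • single ((n+a-2) :: T) (1:ℤ) := by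
      match_scalars
      linear_combination lemC hn ha
    rw [hL, hR, List.getLast?_cons_cons, List.dropLast_cons₂, List.length_cons]
    linear_combination (norm := module) -icons + u1 + u2 + sc' - u3 - u4

/-! #### the main cancellation -/

lemma IV (n a : ℕ) (T : List ℕ) (hn : 0 < n) (ha : 0 < a) :
    (-(2 * Pz 1 n)) • cnsOp (1+n) (T2B (a :: T))
      + (2:ℤ) • cnsOp 1 (hmOp n (T2B (a :: T)))
      + (2 * (-1:ℤ)^n) • hmOp n (SB (a :: T))
      - (2 * Pz n a) • SB ((n + a) :: T)
      + (2 * ch (3 ≤ n)) • cnsOp 1 (hmB (n-2) (a :: T))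
      + (2 * ch (n = 2)) • single ((n-1) :: a :: T) (1:ℤ)
      + (2 * ch (a = 2)) • single (1 :: n :: T) (1:ℤ) = 0 := by
  rw [show 1+n = n+1 from Nat.add_comm 1 n]
  have h2 : hmOp n (T2B (a :: T))
      = (ch (3 ≤ a) * Pz n (a-2)) • single ((n+(a-2)) :: T) (1:ℤ)
        + Pz n a • cnsOp (n+a) (T2B T) := by
    rw [T2B_cons, map_add, map_zsmul, hmOp_single, hm_cns]
    simp only [hmB]
    rw [smul_smul]
  have h3 : hmOp n (SB (a :: T))
      = (ch (3 ≤ a) * Pz n 1) • single ((n+1) :: (a-2) :: T) (1:ℤ)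
        + Pz n 1 • cnsOp (n+1) (cnsOp a (T2B T))
        + ((-1:ℤ)^(a+1) * Pz n a) • cnsOp (n+a) (SB T) := by
    rw [SB_cons, map_add, map_add, map_zsmul, map_zsmul, hmOp_single, hm_cns, hm_cns]
    simp only [hmB]
    rw [smul_smul, smul_smul]
  have h4 : SB ((n + a) :: T) = ch (3 ≤ n+a) • single (1 :: (n+a-2) :: T) (1:ℤ)
      + cnsOp 1 (cnsOp (n+a) (T2B T)) + ((-1:ℤ)^(n+a+1)) • cnsOp (n+a) (SB T) := by
    rw [SB_cons]
  rw [h2, h3, h4, T2B_cons a T]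
  simp only [hmB, map_add, map_zsmul, cns_single, smul_smul]
  have uA : (ch (3 ≤ a) * Pz n (a-2)) • single (1 :: (n+(a-2)) :: T) (1:ℤ)
      = (ch (3 ≤ a) * Pz n (a-2)) • single (1 :: (n+a-2) :: T) (1:ℤ) := by
    by_cases h : 3 ≤ a
    · rw [show n+(a-2) = n+a-2 by omega]
    · simp [ch, h]
  have uB : (ch (3 ≤ n) * Pz (n-2) a) • single (1 :: (n-2+a) :: T) (1:ℤ)
      = (ch (3 ≤ n) * Pz (n-2) a) • single (1 :: (n+a-2) :: T) (1:ℤ) := by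
    by_cases h : 3 ≤ n
    · rw [show n-2+a = n+a-2 by omega]
    · simp [ch, h]
  have uC : ch (n = 2) • single ((n-1) :: a :: T) (1:ℤ)
      = ch (n = 2) • single (1 :: (n+a-2) :: T) (1:ℤ) := by
    by_cases h : n = 2
    · subst h; rw [show (2:ℕ)-1 = 1 from rfl, show 2+a-2 = a by omega]
    · simp [ch, h]
  have uD : ch (a = 2) • single (1 :: n :: T) (1:ℤ)
      = ch (a = 2) • single (1 :: (n+a-2) :: T) (1:ℤ) := by
    by_cases h : a = 2
    · subst h; rw [show n+2-2 = n by omega]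
    · simp [ch, h]
  have w1 : (-(2 * Pz 1 n)) • cnsOp (n+1) (cnsOp a (T2B T))
      + (2 * (-1:ℤ)^n * Pz n 1) • cnsOp (n+1) (cnsOp a (T2B T)) = 0 := by
    rw [Pz_one_left, Pz_one_right]
    match_scalars
    linear_combination 2 * neg_one_pow_even n
  have w2 : (-(2 * Pz 1 n) * ch (3 ≤ a)) • single ((n+1) :: (a-2) :: T) (1:ℤ)
      + (2 * (-1:ℤ)^n * (ch (3 ≤ a) * Pz n 1)) • single ((n+1) :: (a-2) :: T) (1:ℤ) = 0 := by
    rw [Pz_one_left, Pz_one_right]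
    match_scalars
    linear_combination (2 * ch (3 ≤ a)) * neg_one_pow_even n
  have sc' : (2 * (ch (3 ≤ a) * Pz n (a-2))) • single (1 :: (n+a-2) :: T) (1:ℤ)
      + (2 * (ch (3 ≤ n) * Pz (n-2) a)) • single (1 :: (n+a-2) :: T) (1:ℤ)
      - (2 * Pz n a * ch (3 ≤ n+a)) • single (1 :: (n+a-2) :: T) (1:ℤ)
      + (2 * ch (n = 2)) • single (1 :: (n+a-2) :: T) (1:ℤ)
      + (2 * ch (a = 2)) • single (1 :: (n+a-2) :: T) (1:ℤ) = 0 := by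
    match_scalars
    linear_combination 2 * lemC hn ha
  linear_combination (norm := module) w1 + w2 + (2:ℤ) • uA + (2:ℤ) • uB
    + (2:ℤ) • uC + (2:ℤ) • uD + sc' 

/-- the right-hand side sum -/
def Rs (M : List ℕ) : List ℕ →₀ ℤ :=
  ∑ k ∈ Finset.range (M.length + 1),
    ((-1 : ℤ) ^ ((M.length + 1) + (k + 1) + (M.take k).sum)) •
      Finsupp.single (List.insertIdx M k 1) (1 : ℤ)

lemma Rs_cons (n : ℕ) (M : List ℕ) :
    Rs (n :: M) = ((-1:ℤ)^(M.length + 1)) • single (1 :: n :: M) (1:ℤ)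
      + ((-1:ℤ)^n) • cnsOp n (Rs M) := by
  rw [Rs, Rs, List.length_cons, Finset.sum_range_succ', map_sum, Finset.smul_sum, add_comm]
  congr 1
  · -- the k = 0 term
    simp only [List.take_zero, List.sum_nil, List.insertIdx_zero]
    congr 1
    ring
  · refine Finset.sum_congr rfl fun k _ => ?_
    rw [map_zsmul, cns_single, smul_smul]
    congr 1
    simp only [List.take_succ_cons, List.sum_cons, pow_add]
    ring

end Aux

theorem stmt15 (M : List ℕ) (hpos : ∀ m ∈ M, 0 < m) :
    DOp (Finsupp.single (M ++ [2]) (1 : ℤ))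
        - (2 : ℤ) • deltaOp (SOp (Finsupp.single (M ++ [2]) (1 : ℤ)))
        - (2 : ℤ) • SOp (deltaOp (Finsupp.single (M ++ [2]) (1 : ℤ)))
      = (2 : ℤ) • ∑ k ∈ Finset.range (M.length + 1),
          ((-1 : ℤ) ^ ((M.length + 1) + (k + 1) + (M.take k).sum)) •
            Finsupp.single (List.insertIdx M k 1) (1 : ℤ) := by
  induction M with
  | nil =>
    have hd : deltaOp (single [2] (1:ℤ)) = 0 := by rw [deltaOp_single]; simp [dB]
    have hs : SOp (single [2] (1:ℤ)) = 0 := by rw [SOp_single]; simp [SB]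
    have hD : DOp (single [2] (1:ℤ)) = (2:ℤ) • single [1] (1:ℤ) := by
      rw [DOp_single, DB, show [2].length = 1 from rfl, Finset.sum_range_one]
      simp [Qz, Nat.even_iff, smul_single]
    show DOp (single [2] (1:ℤ)) - (2:ℤ) • deltaOp (SOp (single [2] (1:ℤ)))
        - (2:ℤ) • SOp (deltaOp (single [2] (1:ℤ))) = _
    rw [hd, hs]
    simp [hD, Finset.sum_range_one]
  | cons n M' IH =>
    have hn : 0 < n := hpos n (by simp)
    have hn' : 1 ≤ n := hn
    have hM' : ∀ m ∈ M', 0 < m := fun m hm => hpos m (by simp [hm])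
    obtain ⟨a, T, hAT⟩ : ∃ a T, M' ++ [2] = a :: T := by
      cases M' with
      | nil => exact ⟨2, [], rfl⟩
      | cons b u => exact ⟨b, u ++ [2], by simp⟩
    have hposL : ∀ m ∈ a :: T, 0 < m := by
      rw [← hAT]
      intro m hm
      rcases List.mem_append.mp hm with h | h
      · exact hM' m h
      · simp at h; omega
    have ha : 0 < a := hposL a (by simp)
    have hTpos : ∀ m ∈ T, 0 < m := fun m hm => hposL m (by simp [hm])
    have hlen : T.length = M'.length := by
      have := congrArg List.length hAT
      simp at this
      omega
    -- IH, pushed under cons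
    have IH2 : DOp (single (a :: T) (1:ℤ)) - (2:ℤ) • deltaOp (SOp (single (a :: T) (1:ℤ)))
        - (2:ℤ) • SOp (deltaOp (single (a :: T) (1:ℤ))) = (2:ℤ) • Rs M' := by
      rw [← hAT]; exact IH hM'
    have IHc := congrArg (cnsOp n) IH2
    simp only [map_sub, map_zsmul, DOp_single, SOp_single, deltaOp_single] at IHc
    -- P1 instance
    have hP1 := P1 a T ha hTpos
    rw [show (a :: T).getLast? = Option.some 2 by rw [← hAT]; exact List.getLast?_concat,
        if_pos rfl, show (a :: T).dropLast = M' by rw [← hAT]; exact List.dropLast_concat,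
        hlen] at hP1
    have hP1c := congrArg (fun z => cnsOp 1 (cnsOp n z)) hP1
    simp only [map_sub, map_zsmul, apply_ite (cnsOp n), apply_ite (cnsOp 1), map_zero,
      cns_single, T2op_single, deltaOp_single, SOp_single] at hP1c
    -- main rewriting
    show DOp (single ((n :: M') ++ [2]) (1:ℤ))
        - (2:ℤ) • deltaOp (SOp (single ((n :: M') ++ [2]) (1:ℤ)))
        - (2:ℤ) • SOp (deltaOp (single ((n :: M') ++ [2]) (1:ℤ))) = (2:ℤ) • Rs (n :: M')
    rw [List.cons_append, hAT, ← cns_single n (a :: T) (1:ℤ), Rs_cons]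
    rw [D_cns n, delta_cns n, S_cns n]
    simp only [DOp_single, SOp_single, T2op_single, deltaOp_single, hmOp_single, hmB, map_add,
      map_sub, map_zsmul, cns_single, S_cns, delta_cns, hm_cns]
    have hdb : dB (1 :: (n-2) :: a :: T)
        = Pz 1 (n-2) • single ((1+(n-2)) :: a :: T) (1:ℤ)
          - (Pz (n-2) a • single (1 :: ((n-2)+a) :: T) (1:ℤ)
             - cnsOp 1 (cnsOp (n-2) (dB (a :: T)))) := by
      rw [dB_cons, dB_cons]
      simp only [hmB, map_sub, map_zsmul, cns_single]
    rw [hdb]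
    have IVi := IV n a T hn ha
    simp only [hmB, map_zsmul, cns_single] at IVi
    have scA' : (Qz n) • single ((n-1) :: a :: T) (1:ℤ)
        = (2 * (ch (3 ≤ n) * Pz 1 (n-2))) • single ((n-1) :: a :: T) (1:ℤ)
          + (2 * ch (n = 2)) • single ((n-1) :: a :: T) (1:ℤ) := by
      match_scalars
      linear_combination lemA hn'
    have uE : (ch (3 ≤ n) * Pz 1 (n-2)) • single ((1+(n-2)) :: a :: T) (1:ℤ)
        = (ch (3 ≤ n) * Pz 1 (n-2)) • single ((n-1) :: a :: T) (1:ℤ) := by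
      by_cases h : 3 ≤ n
      · rw [show 1+(n-2) = n-1 by omega]
      · simp [ch, h]
    have uF : (if a = 2 then single (1 :: n :: T) (1:ℤ) else 0)
        = ch (a = 2) • single (1 :: n :: T) (1:ℤ) := by
      by_cases h : a = 2 <;> simp [ch, h]
    linear_combination (norm := module) ((-1:ℤ)^n) • IHc + (-2:ℤ) • hP1c + IVi + scA'
      + (-2:ℤ) • uE + (2:ℤ) • uF
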